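/- For every integer m ≥ k ≥ 1, the sequence (1, C(m,1), C(m,2), ..., C(m,k)) is an M-sequence; moreover, for any integer a with 0 ≤ a ≤ C(m,k), the sequence (1, C(m,1), ..., C(m,k-1), a) is also an M-sequence. -/

import Mathlib

/-- The largest `a` such that `C(a,i) ≤ n` (for `n ≥ 1`, `i ≥ 1`):
the top term of the `i`-th Macaulay representation of `n`. -/
def macaulayTop (n i : ℕ) : ℕ :=
  Nat.findGreatest (fun a => Nat.choose a i ≤ n) (n + i)

/-- The Macaulay pseudo-power `n^{<i>}`: write the `i`-th Macaulay representation
`n = C(a_i,i) + C(a_{i-1},i-1) + ⋯ + C(a_j,j)` (computed greedily) and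
return `C(a_i+1,i+1) + C(a_{i-1}+1,i) + ⋯ + C(a_j+1,j+1)`; also `0^{<i>} = 0`. -/
def pseudoPow : ℕ → ℕ → ℕ
  | _, 0 => 0
  | n, (i+1) =>
    if n = 0 then 0
    else Nat.choose (macaulayTop n (i+1) + 1) (i+2) +
      pseudoPow (n - Nat.choose (macaulayTop n (i+1)) (i+1)) i

/-- `(g 0, g 1, …, g k)` is an M-sequence: `g 0 = 1` and
`g (i+1) ≤ (g i)^{<i>}` for all `1 ≤ i < k`. -/
def IsMSequence (g : ℕ → ℕ) (k : ℕ) : Prop :=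
  g 0 = 1 ∧ ∀ i, 1 ≤ i → i < k → g (i + 1) ≤ pseudoPow (g i) i

/-!
For `k ≤ n` the greedy `k`-th Macaulay representation of `C(n, k)` is the single term `C(n, k)`,
because `a ↦ C(a, k)` is strictly increasing for `a ≥ k`; hence `C(n, k)^{<k>} = C(n+1, k+1)`,
which dominates `C(n, k+1)`. For `k > n` both sides vanish. Lowering the last term of an
M-sequence keeps it one, since that term only ever occurs on the small side of an inequality.
-/

namespace Nat

theorem choose_lt_choose_succ {n k : ℕ} (hk : 1 ≤ k) (hkn : k ≤ n) :
    choose n k < choose (n + 1) k := by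
  obtain ⟨j, rfl⟩ : ∃ j, k = j + 1 := ⟨k - 1, by omega⟩
  rw [choose_succ_succ']
  have := choose_pos (show j ≤ n by omega)
  omega

theorem strictMono_choose_add {k : ℕ} (hk : 1 ≤ k) : StrictMono fun n => choose (n + k) k :=
  strictMono_nat_of_lt_succ fun n => by
    simpa only [Nat.add_right_comm n 1 k] using choose_lt_choose_succ hk (le_add_left k n)

theorem choose_lt_choose_of_lt {n a k : ℕ} (hk : 1 ≤ k) (hkn : k ≤ n) (hna : n < a) :
    choose n k < choose a k := by
  have := strictMono_choose_add hk (show n - k < a - k by omega)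
  simpa only [Nat.sub_add_cancel hkn, Nat.sub_add_cancel (hkn.trans hna.le)] using this

theorem le_choose_add {n k : ℕ} (hk : 1 ≤ k) (hkn : k ≤ n) : n ≤ choose n k + k := by
  have := (strictMono_choose_add hk).id_le (n - k)
  simp only [id, Nat.sub_add_cancel hkn] at this
  omega

end Nat

theorem macaulayTop_choose {n k : ℕ} (hk : 1 ≤ k) (hkn : k ≤ n) :
    macaulayTop (n.choose k) k = n := by
  refine Nat.findGreatest_eq_iff.2 ⟨Nat.le_choose_add hk hkn, fun _ => le_rfl, fun a hna _ => ?_⟩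
  exact (Nat.choose_lt_choose_of_lt hk hkn hna).not_ge

@[simp]
theorem pseudoPow_zero_left (i : ℕ) : pseudoPow 0 i = 0 := by
  cases i <;> simp [pseudoPow]

theorem pseudoPow_choose {n k : ℕ} (hk : 1 ≤ k) (hkn : k ≤ n) :
    pseudoPow (n.choose k) k = (n + 1).choose (k + 1) := by
  obtain ⟨j, rfl⟩ : ∃ j, k = j + 1 := ⟨k - 1, by omega⟩
  rw [pseudoPow, if_neg (Nat.choose_pos hkn).ne', macaulayTop_choose hk hkn, Nat.sub_self,
    pseudoPow_zero_left, Nat.add_zero]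

theorem choose_succ_le_pseudoPow_choose (n : ℕ) {k : ℕ} (hk : 1 ≤ k) :
    n.choose (k + 1) ≤ pseudoPow (n.choose k) k := by
  rcases le_or_gt k n with hkn | hnk
  · rw [pseudoPow_choose hk hkn]
    exact Nat.choose_le_succ n (k + 1)
  · simp [Nat.choose_eq_zero_of_lt hnk, Nat.choose_eq_zero_of_lt (hnk.trans (Nat.lt_succ_self k))]

theorem IsMSequence.replace_last_of_le {g : ℕ → ℕ} {k a : ℕ} (hg : IsMSequence g k)
    (hk : 1 ≤ k) (ha : a ≤ g k) : IsMSequence (fun i => if i = k then a else g i) k := by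
  refine ⟨by simpa [(Nat.one_pos.trans_le hk).ne] using hg.1, fun i hi hik => ?_⟩
  simp only [if_neg hik.ne]
  split_ifs with hlast
  · exact (hlast ▸ ha).trans (hg.2 i hi hik)
  · exact hg.2 i hi hik

theorem choose_is_msequence_general (m k : ℕ) (hk : 1 ≤ k) :
    IsMSequence (fun i => Nat.choose m i) k ∧
    ∀ a, a ≤ Nat.choose m k →
      IsMSequence (fun i => if i = k then a else Nat.choose m i) k := by
  have hchoose : IsMSequence (fun i => m.choose i) k :=
    ⟨m.choose_zero_right, fun i hi _ => choose_succ_le_pseudoPow_choose m hi⟩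
  exact ⟨hchoose, fun a ha => hchoose.replace_last_of_le hk ha⟩

/-- for integers `m ≥ k ≥ 1`, the sequence `(1, C(m,1), …, C(m,k))`
is an M-sequence; moreover, for any `0 ≤ a ≤ C(m,k)`, the sequence
`(1, C(m,1), …, C(m,k-1), a)` is also an M-sequence. -/
theorem choose_is_msequence (m k : ℕ) (hk : 1 ≤ k) (hkm : k ≤ m) :
    IsMSequence (fun i => Nat.choose m i) k ∧
    ∀ a, a ≤ Nat.choose m k →
      IsMSequence (fun i => if i = k then a else Nat.choose m i) k :=
  choose_is_msequence_general m k hk
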